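/- arXiv:2309.15029 — 5 statements merged into one kernel-verified Lean document; each statement's English description precedes it below -/
import Mathlib

section
/- Let V be a real inner product space, let p ≥ 2 be an integer, and let ξ₁, …, ξ_p ∈ V. Let δ > 0 and ε ≥ 0 be real numbers with (p − 1)·ε < δ². Assume ‖ξ_i‖ ≥ δ for every 1 ≤ i ≤ p and |⟨ξ_i, ξ_j⟩| ≤ ε for all i ≠ j. Then for all real numbers λ₁, …, λ_p one has (δ² − (p − 1)·ε) · Σ_{j=1}^p |λ_j| ≤ Σ_{j=1}^p |⟨ Σ_{i=1}^p λ_i ξ_i , ξ_j ⟩|. In particular, Σ_{j=1}^p |λ_j| ≤ (Σ_{j=1}^p |α_j|)/(δ² − (p − 1)ε) whenever ⟨ Σ_i λ_i ξ_i , ξ_j ⟩ = α_j for every j. -/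
/-!
Expanding `⟨Σ λ_i ξ_i, ξ_j⟩ = Σ_i λ_i ⟨ξ_i, ξ_j⟩` turns the claim into a lower bound for `λ ᵥ* G`,
where `G` is the Gram matrix of the `ξ_i`: its diagonal entries are at least `δ²` and its
off-diagonal entries at most `ε` in absolute value. The `j`-th entry of `λ ᵥ* G` is then at least
`δ² |λ_j| - ε Σ_{i ≠ j} |λ_i|`, and summing over `j` counts every `|λ_i|` exactly `p - 1` times
in the error terms.
-/

open Finset

namespace Matrix

variable {n : Type*} [Fintype n]

theorem mul_abs_sub_le_abs_vecMul_apply [DecidableEq n] (M : Matrix n n ℝ) (c : n → ℝ)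
    {d ε : ℝ} (hdiag : ∀ j, d ≤ |M j j|) (hoff : ∀ i j, i ≠ j → |M i j| ≤ ε) (j : n) :
    d * |c j| - ε * ∑ i ∈ univ.erase j, |c i| ≤ |(c ᵥ* M) j| := by
  have hdiag_term : d * |c j| ≤ |c j * M j j| := by
    rw [abs_mul, mul_comm]
    exact mul_le_mul_of_nonneg_left (hdiag j) (abs_nonneg _)
  have hoff_terms : |∑ i ∈ univ.erase j, c i * M i j| ≤ ε * ∑ i ∈ univ.erase j, |c i| := by
    rw [mul_sum]
    refine (abs_sum_le_sum_abs _ _).trans (sum_le_sum fun i hi => ?_)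
    rw [abs_mul, mul_comm ε]
    exact mul_le_mul_of_nonneg_left (hoff i j (ne_of_mem_erase hi)) (abs_nonneg _)
  have hsplit : (c ᵥ* M) j = c j * M j j + ∑ i ∈ univ.erase j, c i * M i j := by
    exact (add_sum_erase univ (fun i => c i * M i j) (mem_univ j)).symm
  rw [hsplit]
  linarith [abs_sub_abs_le_abs_add (c j * M j j) (∑ i ∈ univ.erase j, c i * M i j)]

theorem mul_sum_abs_le_sum_abs_vecMul (M : Matrix n n ℝ) (c : n → ℝ) {d ε : ℝ}
    (hdiag : ∀ j, d ≤ |M j j|) (hoff : ∀ i j, i ≠ j → |M i j| ≤ ε) :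
    (d - ((Fintype.card n : ℝ) - 1) * ε) * ∑ j, |c j| ≤ ∑ j, |(c ᵥ* M) j| := by
  classical
  calc (d - ((Fintype.card n : ℝ) - 1) * ε) * ∑ j, |c j|
      = ∑ j, (d * |c j| - ε * ∑ i ∈ univ.erase j, |c i|) := by
        simp only [sum_erase_eq_sub (mem_univ _), sum_sub_distrib, ← mul_sum, mul_sub,
          sum_const, card_univ, nsmul_eq_mul]
        ring
    _ ≤ ∑ j, |(c ᵥ* M) j| :=
        sum_le_sum fun j _ => mul_abs_sub_le_abs_vecMul_apply M c hdiag hoff j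

theorem vecMul_gram_apply {V : Type*} [NormedAddCommGroup V] [InnerProductSpace ℝ V]
    (v : n → V) (c : n → ℝ) (j : n) :
    (c ᵥ* gram ℝ v) j = inner ℝ (∑ i, c i • v i) (v j) := by
  simp only [vecMul, dotProduct, gram_apply, sum_inner, real_inner_smul_left]

end Matrix

theorem almost_orthogonal_coeff_bound_general
    {V : Type*} [NormedAddCommGroup V] [InnerProductSpace ℝ V]
    (p : ℕ) (ξ : Fin p → V) (δ ε : ℝ)
    (hδ : 0 < δ)
    (hεδ : ((p : ℝ) - 1) * ε < δ ^ 2)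
    (hnorm : ∀ i : Fin p, δ ≤ ‖ξ i‖)
    (hinner : ∀ i j : Fin p, i ≠ j → |(inner ℝ (ξ i) (ξ j) : ℝ)| ≤ ε) :
    ∀ lam : Fin p → ℝ,
      (δ ^ 2 - ((p : ℝ) - 1) * ε) * ∑ j, |lam j|
        ≤ ∑ j, |(inner ℝ (∑ i, lam i • ξ i) (ξ j) : ℝ)| ∧
      ∀ α : Fin p → ℝ,
        (∀ j, (inner ℝ (∑ i, lam i • ξ i) (ξ j) : ℝ) = α j) →
        ∑ j, |lam j| ≤ (∑ j, |α j|) / (δ ^ 2 - ((p : ℝ) - 1) * ε) := by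
  intro lam
  have hdiag (j : Fin p) : δ ^ 2 ≤ |Matrix.gram ℝ ξ j j| := by
    rw [Matrix.gram_apply, real_inner_self_eq_norm_sq, abs_of_nonneg (by positivity)]
    exact pow_le_pow_left₀ hδ.le (hnorm j) 2
  have hbound := Matrix.mul_sum_abs_le_sum_abs_vecMul (Matrix.gram ℝ ξ) lam hdiag hinner
  simp only [Matrix.vecMul_gram_apply, Fintype.card_fin] at hbound
  refine ⟨hbound, fun α hα => ?_⟩
  rw [le_div_iff₀ (by linarith), mul_comm]
  simpa only [hα] using hbound

/-- Quantitative estimate behind Lemma 5.3: for almost-orthogonal vectors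
`ξ₁, …, ξ_p` in a real inner product space, one has
`(δ² − (p−1)ε) · Σ |λ_j| ≤ Σ |⟨Σ λ_i ξ_i, ξ_j⟩|`; in particular, if
`⟨Σ λ_i ξ_i, ξ_j⟩ = α_j` for every `j`, then
`Σ |λ_j| ≤ (Σ |α_j|) / (δ² − (p−1)ε)`. -/
theorem almost_orthogonal_coeff_bound
    {V : Type*} [NormedAddCommGroup V] [InnerProductSpace ℝ V]
    (p : ℕ) (hp : 2 ≤ p) (ξ : Fin p → V) (δ ε : ℝ)
    (hδ : 0 < δ) (hε : 0 ≤ ε)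
    (hεδ : ((p : ℝ) - 1) * ε < δ ^ 2)
    (hnorm : ∀ i : Fin p, δ ≤ ‖ξ i‖)
    (hinner : ∀ i j : Fin p, i ≠ j → |(inner ℝ (ξ i) (ξ j) : ℝ)| ≤ ε) :
    ∀ lam : Fin p → ℝ,
      (δ ^ 2 - ((p : ℝ) - 1) * ε) * ∑ j, |lam j|
        ≤ ∑ j, |(inner ℝ (∑ i, lam i • ξ i) (ξ j) : ℝ)| ∧
      ∀ α : Fin p → ℝ,
        (∀ j, (inner ℝ (∑ i, lam i • ξ i) (ξ j) : ℝ) = α j) →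
        ∑ j, |lam j| ≤ (∑ j, |α j|) / (δ ^ 2 - ((p : ℝ) - 1) * ε) :=
  almost_orthogonal_coeff_bound_general p ξ δ ε hδ hεδ hnorm hinner
end

section
/- Let A be a unital C*-algebra with a tracial state τ. Let p ≥ 2 be an integer, let ξ₁, …, ξ_p ∈ A be self-adjoint elements with ‖ξ_i‖∞ ≤ 1 for all i, and let α₁, …, α_p ∈ ℝ. Let δ ∈ (0,1) and ε ∈ (0, δ²/(p−1)) be real numbers. Assume ‖ξ_i‖₂ ≥ δ for every 1 ≤ i ≤ p, and |τ(ξ_i ξ_j)| ≤ ε for all 1 ≤ i < j ≤ p. Then there exists h ∈ A with h* = h, ‖h‖∞ ≤ (Σ_{j=1}^p |α_j|)/(δ² − (p−1)ε), and τ(h ξ_i) = α_i for every 1 ≤ i ≤ p. -/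
/-- A tracial state on a unital C*-algebra `A`, viewed as a `ℂ`-linear functional:
it is unital, takes nonnegative real values on elements of the form `a* a`,
and is tracial. -/
structure IsTracialState {A : Type*} [NormedRing A] [StarRing A] [NormedAlgebra ℂ A]
    (τ : A →ₗ[ℂ] ℂ) : Prop where
  map_one : τ 1 = 1
  nonneg_re : ∀ a : A, 0 ≤ (τ (star a * a)).re
  im_eq_zero : ∀ a : A, (τ (star a * a)).im = 0
  trace_comm : ∀ a b : A, τ (a * b) = τ (b * a)

/-- The 2-norm `‖x‖₂ = τ(x* x)^{1/2}` associated with a tracial state `τ`. -/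
noncomputable def trNorm2 {A : Type*} [NormedRing A] [StarRing A] [NormedAlgebra ℂ A]
    (τ : A →ₗ[ℂ] ℂ) (x : A) : ℝ :=
  Real.sqrt ((τ (star x * x)).re)

/-! Let `G` be the real Gram matrix `G i j = Re τ(ξ i ξ j)`. Its diagonal is at least `δ²` and its
off-diagonal entries are at most `ε` in absolute value, so row by row
`(δ² - (p-1)ε) ∑ |c i| ≤ ∑ |(G c) i|`. Hence `G` is invertible and the solution of `G c = α`
satisfies `∑ |c i| ≤ ∑ |α i| / (δ² - (p-1)ε)`. The self-adjoint element `h = ∑ c j • ξ j` then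
works: `τ(ξ j ξ i)` is real for self-adjoint `ξ`, so `τ(h ξ i) = (G c) i`, and `‖h‖ ≤ ∑ |c j|`
since the `ξ j` are contractions. -/

namespace Matrix

variable {ι : Type*} [Fintype ι] [DecidableEq ι] {G : Matrix ι ι ℝ} {d ε : ℝ}

theorem mul_abs_sub_le_abs_mulVec (hdiag : ∀ i, d ≤ G i i)
    (hoff : ∀ i j, i ≠ j → |G i j| ≤ ε) (c : ι → ℝ) (i : ι) :
    d * |c i| - ε * (∑ j, |c j| - |c i|) ≤ |(G *ᵥ c) i| := by
  have hsplit : (G *ᵥ c) i = G i i * c i + ∑ j ∈ Finset.univ.erase i, G i j * c j :=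
    (Finset.add_sum_erase _ (fun j => G i j * c j) (Finset.mem_univ i)).symm
  have hdiag_term : d * |c i| ≤ |G i i * c i| :=
    calc d * |c i| ≤ G i i * |c i| := mul_le_mul_of_nonneg_right (hdiag i) (abs_nonneg _)
      _ ≤ |G i i| * |c i| := mul_le_mul_of_nonneg_right (le_abs_self _) (abs_nonneg _)
      _ = |G i i * c i| := (abs_mul _ _).symm
  have hoff_terms : |∑ j ∈ Finset.univ.erase i, G i j * c j| ≤ ε * (∑ j, |c j| - |c i|) :=
    calc |∑ j ∈ Finset.univ.erase i, G i j * c j|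
        ≤ ∑ j ∈ Finset.univ.erase i, |G i j| * |c j| :=
          (Finset.abs_sum_le_sum_abs _ _).trans_eq
            (Finset.sum_congr rfl fun j _ => abs_mul _ _)
      _ ≤ ∑ j ∈ Finset.univ.erase i, ε * |c j| := Finset.sum_le_sum fun j hj =>
          mul_le_mul_of_nonneg_right (hoff i j (Finset.ne_of_mem_erase hj).symm) (abs_nonneg _)
      _ = ε * (∑ j, |c j| - |c i|) := by
          rw [← Finset.mul_sum, Finset.sum_erase_eq_sub (Finset.mem_univ i)]
  have htriangle : |G i i * c i| ≤ |(G *ᵥ c) i| + |∑ j ∈ Finset.univ.erase i, G i j * c j| := by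
    simpa only [hsplit, add_sub_cancel_right] using
      abs_sub ((G *ᵥ c) i) (∑ j ∈ Finset.univ.erase i, G i j * c j)
  linarith

theorem mul_sum_abs_le_sum_abs_mulVec (hdiag : ∀ i, d ≤ G i i)
    (hoff : ∀ i j, i ≠ j → |G i j| ≤ ε) (c : ι → ℝ) :
    (d - ((Fintype.card ι : ℝ) - 1) * ε) * ∑ i, |c i| ≤ ∑ i, |(G *ᵥ c) i| :=
  calc (d - ((Fintype.card ι : ℝ) - 1) * ε) * ∑ i, |c i|
      = ∑ i, (d * |c i| - ε * (∑ j, |c j| - |c i|)) := by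
        simp only [Finset.sum_sub_distrib, ← Finset.mul_sum, Finset.sum_const,
          Finset.card_univ, nsmul_eq_mul]
        ring
    _ ≤ ∑ i, |(G *ᵥ c) i| :=
        Finset.sum_le_sum fun i _ => mul_abs_sub_le_abs_mulVec hdiag hoff c i

theorem exists_mulVec_eq_sum_abs_le_of_diag_dominant (hdiag : ∀ i, d ≤ G i i)
    (hoff : ∀ i j, i ≠ j → |G i j| ≤ ε) (hdom : 0 < d - ((Fintype.card ι : ℝ) - 1) * ε)
    (α : ι → ℝ) :
    ∃ c, G *ᵥ c = α ∧ ∑ i, |c i| ≤ (∑ i, |α i|) / (d - ((Fintype.card ι : ℝ) - 1) * ε) := by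
  have hinj : Function.Injective G.mulVec := by
    intro c₁ c₂ h
    have hsum := mul_sum_abs_le_sum_abs_mulVec hdiag hoff (c₁ - c₂)
    simp only [mulVec_sub, h, sub_self, Pi.zero_apply, abs_zero, Finset.sum_const_zero] at hsum
    have hzero := (Finset.sum_eq_zero_iff_of_nonneg fun i _ => abs_nonneg ((c₁ - c₂) i)).mp
      (le_antisymm (nonpos_of_mul_nonpos_right hsum hdom) (by positivity))
    funext i
    simpa [sub_eq_zero] using hzero i (Finset.mem_univ i)
  obtain ⟨c, rfl⟩ := mulVec_surjective_iff_isUnit.mpr (mulVec_injective_iff_isUnit.mp hinj) α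
  exact ⟨c, rfl, (le_div_iff₀' hdom).mpr (mul_sum_abs_le_sum_abs_mulVec hdiag hoff c)⟩

end Matrix

theorem norm_sum_ofReal_smul_le {ι E : Type*} [SeminormedAddCommGroup E] [NormedSpace ℂ E]
    (s : Finset ι) (c : ι → ℝ) {x : ι → E} (hx : ∀ i, ‖x i‖ ≤ 1) :
    ‖∑ i ∈ s, (c i : ℂ) • x i‖ ≤ ∑ i ∈ s, |c i| :=
  (norm_sum_le _ _).trans <| Finset.sum_le_sum fun i _ => by
    rw [norm_smul, Complex.norm_real, Real.norm_eq_abs]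
    exact mul_le_of_le_one_right (abs_nonneg _) (hx i)

section TraceGram

open Matrix

variable {A : Type*} [NormedRing A] [StarRing A] [NormedAlgebra ℂ A] {τ : A →ₗ[ℂ] ℂ}

theorem IsTracialState.sq_trNorm2 (hτ : IsTracialState τ) (x : A) :
    trNorm2 τ x ^ 2 = (τ (star x * x)).re :=
  Real.sq_sqrt (hτ.nonneg_re x)

theorem IsTracialState.im_mul_eq_zero (hτ : IsTracialState τ) {a b : A}
    (ha : IsSelfAdjoint a) (hb : IsSelfAdjoint b) : (τ (a * b)).im = 0 := by
  -- polarization: `τ((a + b)²)`, `τ(a²)`, `τ(b²)` are real and `τ(b a) = τ(a b)`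
  have hsum := hτ.im_eq_zero (a + b)
  have ha' := hτ.im_eq_zero a
  have hb' := hτ.im_eq_zero b
  rw [ha.star_eq] at ha'
  rw [hb.star_eq] at hb'
  rw [star_add, ha.star_eq, hb.star_eq, add_mul, mul_add, mul_add, map_add, map_add, map_add,
    hτ.trace_comm b a] at hsum
  simp only [Complex.add_im] at hsum
  linarith

theorem IsTracialState.ofReal_re_mul (hτ : IsTracialState τ) {a b : A}
    (ha : IsSelfAdjoint a) (hb : IsSelfAdjoint b) : ((τ (a * b)).re : ℂ) = τ (a * b) :=
  Complex.ext rfl (by simp [hτ.im_mul_eq_zero ha hb])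

variable {ι : Type*}

noncomputable def traceGram (τ : A →ₗ[ℂ] ℂ) (ξ : ι → A) : Matrix ι ι ℝ :=
  Matrix.of fun i j => (τ (ξ i * ξ j)).re

theorem IsTracialState.traceGram_comm (hτ : IsTracialState τ) (ξ : ι → A) (i j : ι) :
    traceGram τ ξ i j = traceGram τ ξ j i := by
  simp only [traceGram, Matrix.of_apply, hτ.trace_comm (ξ i)]

theorem IsTracialState.abs_traceGram_le [LinearOrder ι] (hτ : IsTracialState τ) {ξ : ι → A}
    {ε : ℝ} (hξ : ∀ i j, i < j → ‖τ (ξ i * ξ j)‖ ≤ ε) (i j : ι) (hij : i ≠ j) :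
    |traceGram τ ξ i j| ≤ ε := by
  rcases hij.lt_or_gt with hlt | hgt
  · exact (Complex.abs_re_le_norm _).trans (hξ i j hlt)
  · rw [hτ.traceGram_comm]
    exact (Complex.abs_re_le_norm _).trans (hξ j i hgt)

theorem IsTracialState.map_sum_smul_mul [Fintype ι] (hτ : IsTracialState τ) {ξ : ι → A}
    (hξ : ∀ i, IsSelfAdjoint (ξ i)) (c : ι → ℝ) (i : ι) :
    τ ((∑ j, (c j : ℂ) • ξ j) * ξ i) = (traceGram τ ξ *ᵥ c) i := by
  simp only [Finset.sum_mul, smul_mul_assoc, map_sum, map_smul, mulVec, dotProduct,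
    Complex.ofReal_sum, Complex.ofReal_mul]
  refine Finset.sum_congr rfl fun j _ => ?_
  rw [hτ.traceGram_comm, traceGram, Matrix.of_apply, hτ.ofReal_re_mul (hξ j) (hξ i), smul_eq_mul,
    mul_comm]

end TraceGram

theorem exists_selfAdjoint_with_prescribed_traces_general
    {A : Type*} [NormedRing A] [StarRing A]
    [NormedAlgebra ℂ A] [StarModule ℂ A]
    (τ : A →ₗ[ℂ] ℂ) (hτ : IsTracialState τ)
    (p : ℕ) (hp : 2 ≤ p) (ξ : Fin p → A)
    (hsa : ∀ i, star (ξ i) = ξ i) (hcontr : ∀ i, ‖ξ i‖ ≤ 1)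
    (α : Fin p → ℝ) (δ ε : ℝ)
    (hδ0 : 0 < δ)
    (hε1 : ε < δ ^ 2 / ((p : ℝ) - 1))
    (hnorm2 : ∀ i, δ ≤ trNorm2 τ (ξ i))
    (hortho : ∀ i j : Fin p, i < j → ‖τ (ξ i * ξ j)‖ ≤ ε) :
    ∃ h : A, star h = h ∧
      ‖h‖ ≤ (∑ j, |α j|) / (δ ^ 2 - ((p : ℝ) - 1) * ε) ∧
      ∀ i, τ (h * ξ i) = (α i : ℂ) := by
  have hdiag (i : Fin p) : δ ^ 2 ≤ traceGram τ ξ i i := by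
    have := pow_le_pow_left₀ hδ0.le (hnorm2 i) 2
    rwa [hτ.sq_trNorm2, hsa i] at this
  have hdom : 0 < δ ^ 2 - ((Fintype.card (Fin p) : ℝ) - 1) * ε := by
    have hp1 : (0 : ℝ) < p - 1 := by
      rw [sub_pos, Nat.one_lt_cast]
      omega
    rw [Fintype.card_fin, sub_pos, mul_comm, ← lt_div_iff₀ hp1]
    exact hε1
  obtain ⟨c, hc, hc_le⟩ := Matrix.exists_mulVec_eq_sum_abs_le_of_diag_dominant hdiag
    (hτ.abs_traceGram_le hortho) hdom α
  rw [Fintype.card_fin] at hc_le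
  refine ⟨∑ j, (c j : ℂ) • ξ j, ?_, (norm_sum_ofReal_smul_le _ c hcontr).trans hc_le, ?_⟩
  · exact isSelfAdjoint_sum _ fun j _ => .smul (Complex.conj_ofReal (c j)) (hsa j)
  · intro i
    rw [hτ.map_sum_smul_mul hsa, hc]

/-- Lemma 5.3: given self-adjoint contractions `ξ₁, …, ξ_p` in a tracial
C*-algebra with `‖ξ_i‖₂ ≥ δ` and `|τ(ξ_i ξ_j)| ≤ ε` for `i < j`, where
`0 < δ < 1` and `0 < ε < δ²/(p−1)`, and target values `α₁, …, α_p ∈ ℝ`,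
there is a self-adjoint `h` with `‖h‖ ≤ (Σ|α_j|)/(δ² − (p−1)ε)` and
`τ(h ξ_i) = α_i` for all `i`. -/
theorem exists_selfAdjoint_with_prescribed_traces
    {A : Type*} [NormedRing A] [StarRing A] [CStarRing A]
    [NormedAlgebra ℂ A] [StarModule ℂ A] [CompleteSpace A]
    (τ : A →ₗ[ℂ] ℂ) (hτ : IsTracialState τ)
    (p : ℕ) (hp : 2 ≤ p) (ξ : Fin p → A)
    (hsa : ∀ i, star (ξ i) = ξ i) (hcontr : ∀ i, ‖ξ i‖ ≤ 1)
    (α : Fin p → ℝ) (δ ε : ℝ)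
    (hδ0 : 0 < δ) (hδ1 : δ < 1)
    (hε0 : 0 < ε) (hε1 : ε < δ ^ 2 / ((p : ℝ) - 1))
    (hnorm2 : ∀ i, δ ≤ trNorm2 τ (ξ i))
    (hortho : ∀ i j : Fin p, i < j → ‖τ (ξ i * ξ j)‖ ≤ ε) :
    ∃ h : A, star h = h ∧
      ‖h‖ ≤ (∑ j, |α j|) / (δ ^ 2 - ((p : ℝ) - 1) * ε) ∧
      ∀ i, τ (h * ξ i) = (α i : ℂ) :=
  exists_selfAdjoint_with_prescribed_traces_general τ hτ p hp ξ hsa hcontr α δ ε hδ0 hε1 hnorm2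
    hortho
end

section
/- Let A be a unital C*-algebra, let h ∈ A be self-adjoint (h* = h), and let λ be a real number with ‖h‖ ≤ λ ≤ 1. Set u := exp(i·h), the exponential of i·h in the Banach algebra A. Then for all x, y ∈ A with ‖x‖ ≤ 1 and ‖y‖ ≤ 1 one has ‖ u x u* y − ( x y + i·(h x y − x h y) ) ‖ ≤ 4λ². -/
/-!
With `a = i h` (skew-adjoint, `‖a‖ ≤ λ ≤ 1`), `u = exp a` is unitary and
`u = 1 + a + E₁`, `u* = exp (-a) = 1 - a + E₂` with second-order Taylor remainders
`‖E₁‖, ‖E₂‖ ≤ ‖a‖² ≤ λ²`. Expanding, `u x u* - (x + [a, x]) = E₁ x u* + x E₂ + a x E₂ - a x a`;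
right multiplication by the unitary `u*` is isometric, so each of the four terms has norm
at most `λ²`, and multiplying by the contraction `y` does not increase the norm.
-/

open NormedSpace Nat

section ExpTaylor

variable {𝔸 : Type*} [NormedRing 𝔸] [NormedAlgebra ℚ 𝔸] [CompleteSpace 𝔸]

theorem NormedSpace.norm_exp_sub_one_sub_le (a : 𝔸) :
    ‖exp a - 1 - a‖ ≤ Real.exp ‖a‖ - 1 - ‖a‖ := by
  have hsplit := (expSeries_summable' (𝕂 := ℚ) a).sum_add_tsum_nat_add 2
  have hsplitℝ := (Real.summable_pow_div_factorial ‖a‖).sum_add_tsum_nat_add 2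
  have htail : exp a - 1 - a = ∑' n, ((n + 2)!⁻¹ : ℚ) • a ^ (n + 2) := by
    rw [congrFun exp_eq_tsum_rat a, ← hsplit]
    simp only [Finset.sum_range_succ, Finset.range_one, Finset.sum_singleton, factorial_zero,
      factorial_one, cast_one, inv_one, pow_zero, pow_one, one_smul]
    abel
  have htailℝ : Real.exp ‖a‖ - 1 - ‖a‖ = ∑' n, ‖a‖ ^ (n + 2) / (n + 2)! := by
    rw [Real.exp_eq_exp_ℝ, congrFun exp_eq_tsum_div ‖a‖, ← hsplitℝ]
    simp only [Finset.sum_range_succ, Finset.range_one, Finset.sum_singleton, factorial_zero,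
      factorial_one, cast_one, pow_zero, pow_one, div_one]
    ring
  rw [htail, htailℝ]
  have hsummableℝ := (summable_nat_add_iff 2).2 (Real.summable_pow_div_factorial ‖a‖)
  refine tsum_of_norm_bounded hsummableℝ.hasSum fun n => ?_
  rw [norm_smul, div_eq_inv_mul]
  gcongr
  · rw [← Rat.norm_cast_real]; simp
  · exact norm_pow_le' a (by omega)

theorem NormedSpace.norm_exp_sub_one_sub_le_sq {a : 𝔸} (ha : ‖a‖ ≤ 1) :
    ‖exp a - 1 - a‖ ≤ ‖a‖ ^ 2 := by
  have hreal := Real.abs_exp_sub_one_sub_id_le (x := ‖a‖) (by rwa [abs_norm])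
  exact (norm_exp_sub_one_sub_le a).trans ((le_abs_self _).trans hreal)

end ExpTaylor

theorem mul_mul_sub_add_commutator_eq {R : Type*} [Ring R] (u v a x : R) :
    u * x * v - (x + (a * x - x * a))
      = (u - 1 - a) * x * v + x * (v - 1 + a) + a * x * (v - 1 + a) - a * x * a := by
  noncomm_ring

theorem CStarRing.norm_conj_sub_add_commutator_le {E : Type*} [NormedRing E] [StarRing E]
    [CStarRing E] {u : E} (hu : u ∈ unitary E) (a : E) {x : E} (hx : ‖x‖ ≤ 1) :
    ‖u * x * star u - (x + (a * x - x * a))‖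
      ≤ ‖u - 1 - a‖ + (1 + ‖a‖) * ‖star u - 1 + a‖ + ‖a‖ ^ 2 := by
  have hstar : star u ∈ unitary E := Unitary.star_mem hu
  rw [mul_mul_sub_add_commutator_eq]
  calc _ ≤ ‖(u - 1 - a) * x * star u‖ + ‖x * (star u - 1 + a)‖
        + ‖a * x * (star u - 1 + a)‖ + ‖a * x * a‖ := norm_sub_le_of_le norm_add₃_le le_rfl
    _ ≤ ‖u - 1 - a‖ * ‖x‖ + ‖x‖ * ‖star u - 1 + a‖ + ‖a‖ * ‖x‖ * ‖star u - 1 + a‖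
        + ‖a‖ * ‖x‖ * ‖a‖ := by
      rw [norm_mul_mem_unitary _ hstar]
      gcongr
      all_goals first | exact norm_mul_le _ _ | exact norm_mul₃_le
    _ ≤ ‖u - 1 - a‖ * 1 + 1 * ‖star u - 1 + a‖ + ‖a‖ * 1 * ‖star u - 1 + a‖
        + ‖a‖ * 1 * ‖a‖ := by gcongr
    _ = _ := by ring

/-- Second-order estimate for conjugation by the unitary `u = exp(i h)` with
`h` self-adjoint, `‖h‖ ≤ λ ≤ 1`: for all contractions `x, y`,
`‖u x u* y − (x y + i (h x y − x h y))‖ ≤ 4λ²`. -/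
theorem exp_selfAdjoint_conjugation_estimate
    {A : Type*} [NormedRing A] [StarRing A] [CStarRing A]
    [NormedAlgebra ℂ A] [StarModule ℂ A] [CompleteSpace A]
    (h : A) (hsa : star h = h) (l : ℝ) (hl : ‖h‖ ≤ l) (hl1 : l ≤ 1) :
    ∀ x y : A, ‖x‖ ≤ 1 → ‖y‖ ≤ 1 →
      ‖NormedSpace.exp (Complex.I • h) * x * star (NormedSpace.exp (Complex.I • h)) * y
        - (x * y + Complex.I • (h * x * y - x * h * y))‖ ≤ 4 * l ^ 2 := by
  intro x y hx hy
  let _ : NormedAlgebra ℚ A := .restrictScalars ℚ ℂ A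
  set a := Complex.I • h with ha
  have hstar_a : star a = -a := by simp [a, star_smul, hsa]
  have hal : ‖a‖ ≤ l := by simpa [a, norm_smul] using hl
  have ha1 : ‖a‖ ≤ 1 := hal.trans hl1
  have hu : exp a ∈ unitary A :=
    exp_mem_unitary_of_mem_skewAdjoint (skewAdjoint.mem_iff.2 hstar_a)
  have hE₁ : ‖exp a - 1 - a‖ ≤ l ^ 2 :=
    (norm_exp_sub_one_sub_le_sq ha1).trans (by gcongr)
  have hE₂ : ‖star (exp a) - 1 + a‖ ≤ l ^ 2 := by
    rw [star_exp, hstar_a, ← sub_neg_eq_add]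
    exact (norm_exp_sub_one_sub_le_sq (by rwa [norm_neg])).trans
      (by rw [norm_neg]; gcongr)
  have hfactor : exp a * x * star (exp a) * y - (x * y + Complex.I • (h * x * y - x * h * y))
      = (exp a * x * star (exp a) - (x + (a * x - x * a))) * y := by
    simp only [ha, smul_sub, smul_mul_assoc, mul_smul_comm, sub_mul, add_mul]
  calc _ = ‖(exp a * x * star (exp a) - (x + (a * x - x * a))) * y‖ := by rw [hfactor]
    _ ≤ (l ^ 2 + (1 + 1) * l ^ 2 + l ^ 2) * 1 :=
      norm_mul_le_of_le ((CStarRing.norm_conj_sub_add_commutator_le hu a hx).trans (by gcongr)) hy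
    _ = 4 * l ^ 2 := by ring
end

section
/- Let A be a unital C*-algebra with a tracial state τ, and let A₀, B₀ ⊆ A be star-subalgebras that are 2-independent with respect to τ. Then for all self-adjoint x, x' ∈ A₀ and all self-adjoint y, y' ∈ B₀ with τ(x) = τ(x') = τ(y) = τ(y') = 0, one has ⟨[x, y], [x', y']⟩ = 2·τ(x x')·τ(y y'), i.e., τ([x', y']* [x, y]) = 2·τ(x x')·τ(y y'). -/
/-- If `A₀, B₀` are 2-independent star-subalgebras with respect to a tracial
state `τ`, then for all trace-zero self-adjoint `x, x' ∈ A₀` and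
`y, y' ∈ B₀`, one has `⟨[x, y], [x', y']⟩ = 2 τ(x x') τ(y y')`. -/
theorem inner_commutator_of_two_independent
    {A : Type*} [NormedRing A] [StarRing A] [CStarRing A]
    [NormedAlgebra ℂ A] [StarModule ℂ A] [CompleteSpace A]
    (τ : A →ₗ[ℂ] ℂ) (hτ : IsTracialState τ)
    (A₀ B₀ : StarSubalgebra ℂ A)
    (hind1 : ∀ a ∈ A₀, ∀ b ∈ B₀, τ (a * b) = τ a * τ b)
    (hind2 : ∀ a₁ ∈ A₀, ∀ a₂ ∈ A₀, ∀ b₁ ∈ B₀, ∀ b₂ ∈ B₀,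
      τ a₁ = 0 → τ a₂ = 0 → τ b₁ = 0 → τ b₂ = 0 → τ (a₁ * b₁ * a₂ * b₂) = 0) :
    ∀ x x' y y' : A, x ∈ A₀ → x' ∈ A₀ → y ∈ B₀ → y' ∈ B₀ →
      star x = x → star x' = x' → star y = y → star y' = y' →
      τ x = 0 → τ x' = 0 → τ y = 0 → τ y' = 0 →
      τ (star (x' * y' - y' * x') * (x * y - y * x))
        = 2 * τ (x * x') * τ (y * y') := by
  intro x x' y y' hxA hx'A hyB hy'B hx hx' hy hy' tx tx' ty ty'
  have hs : star (x' * y' - y' * x') = y' * x' - x' * y' := by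
    simp [star_sub, star_mul, hx', hy']
  rw [hs]
  have hexp : (y' * x' - x' * y') * (x * y - y * x)
      = y' * (x' * (x * y)) - y' * (x' * (y * x)) - x' * (y' * (x * y))
        + x' * (y' * (y * x)) := by noncomm_ring
  rw [hexp, map_add, map_sub, map_sub]
  have e1 : τ (y' * (x' * (x * y))) = τ (x * x') * τ (y * y') := by
    rw [hτ.trace_comm]
    have : x' * (x * y) * y' = x' * x * (y * y') := by noncomm_ring
    rw [this, hind1 (x' * x) (mul_mem hx'A hxA) (y * y') (mul_mem hyB hy'B),
      hτ.trace_comm x' x]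
  have e2 : τ (y' * (x' * (y * x))) = 0 := by
    rw [hτ.trace_comm]
    have : x' * (y * x) * y' = x' * y * x * y' := by noncomm_ring
    rw [this]
    exact hind2 x' hx'A x hxA y hyB y' hy'B tx' tx ty ty'
  have e3 : τ (x' * (y' * (x * y))) = 0 := by
    have : x' * (y' * (x * y)) = x' * y' * x * y := by noncomm_ring
    rw [this]
    exact hind2 x' hx'A x hxA y' hy'B y hyB tx' tx ty' ty
  have e4 : τ (x' * (y' * (y * x))) = τ (x * x') * τ (y * y') := by
    rw [hτ.trace_comm]
    have : y' * (y * x) * x' = y' * y * (x * x') := by noncomm_ring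
    rw [this, hτ.trace_comm (y' * y) (x * x'),
      hind1 (x * x') (mul_mem hxA hx'A) (y' * y) (mul_mem hy'B hyB),
      hτ.trace_comm y' y]
  rw [e1, e2, e3, e4]
  ring
end

section
/- Let A be a unital C*-algebra with a tracial state τ, and let A₀, B₀ ⊆ A be star-subalgebras that are 2-independent with respect to τ. Then for every self-adjoint x ∈ A₀ and every self-adjoint y ∈ B₀ with τ(x) = τ(y) = 0, one has ‖[x, y]‖₂ = √2 · ‖x‖₂ · ‖y‖₂. In particular, if in addition ‖x‖₂ > 0 and ‖y‖₂ > 0, then [x, y] ≠ 0. -/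
/-!
Expanding `[x, y]* [x, y] = -[x, y]²` and cycling under the trace gives
`‖[x, y]‖₂² = 2 τ(x² y²) - 2 τ(x y x y)`. Two-independence makes the first term
`τ(x²) τ(y²) = ‖x‖₂² ‖y‖₂²` and kills the second.
-/

theorem trace_star_commutator_mul_commutator {R A : Type*} [CommRing R] [Ring A] [StarRing A]
    [Algebra R A] (τ : A →ₗ[R] R) (hτ : ∀ a b : A, τ (a * b) = τ (b * a))
    {x y : A} (hx : IsSelfAdjoint x) (hy : IsSelfAdjoint y) :
    τ (star (x * y - y * x) * (x * y - y * x)) =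
      2 * τ (x * x * (y * y)) - 2 * τ (x * y * x * y) := by
  have hstar : star (x * y - y * x) = y * x - x * y := by
    rw [star_sub, star_mul, star_mul, hx.star_eq, hy.star_eq]
  have hyxxy : τ (y * x * x * y) = τ (x * x * (y * y)) := by
    simpa only [mul_assoc] using hτ y (x * x * y)
  have hyxyx : τ (y * x * y * x) = τ (x * y * x * y) := by
    simpa only [mul_assoc] using hτ y (x * y * x)
  have hxyyx : τ (x * y * y * x) = τ (x * x * (y * y)) := by
    simpa only [mul_assoc] using hτ (x * y * y) x
  calc τ (star (x * y - y * x) * (x * y - y * x))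
      = τ (y * x * x * y) - τ (y * x * y * x) - τ (x * y * x * y) + τ (x * y * y * x) := by
        rw [hstar, ← map_sub, ← map_sub, ← map_add]; congr 1; noncomm_ring
    _ = 2 * τ (x * x * (y * y)) - 2 * τ (x * y * x * y) := by
        rw [hyxxy, hyxyx, hxyyx]; ring

section TracialState

variable {A : Type*} [NormedRing A] [StarRing A] [NormedAlgebra ℂ A]

theorem trNorm2_zero (τ : A →ₗ[ℂ] ℂ) : trNorm2 τ 0 = 0 := by
  simp [trNorm2]

theorem trNorm2_nonneg (τ : A →ₗ[ℂ] ℂ) (a : A) : 0 ≤ trNorm2 τ a :=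
  Real.sqrt_nonneg _

theorem IsTracialState.trace_star_mul_self {τ : A →ₗ[ℂ] ℂ} (hτ : IsTracialState τ) (a : A) :
    τ (star a * a) = ((trNorm2 τ a ^ 2 : ℝ) : ℂ) := by
  rw [trNorm2, Real.sq_sqrt (hτ.nonneg_re a)]
  exact Complex.ext rfl (hτ.im_eq_zero a)

end TracialState

theorem norm2_commutator_of_two_independent_general
    {A : Type*} [NormedRing A] [StarRing A]
    [NormedAlgebra ℂ A] [StarModule ℂ A]
    (τ : A →ₗ[ℂ] ℂ) (hτ : IsTracialState τ)
    (A₀ B₀ : StarSubalgebra ℂ A)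
    (hind1 : ∀ a ∈ A₀, ∀ b ∈ B₀, τ (a * b) = τ a * τ b)
    (hind2 : ∀ a₁ ∈ A₀, ∀ a₂ ∈ A₀, ∀ b₁ ∈ B₀, ∀ b₂ ∈ B₀,
      τ a₁ = 0 → τ a₂ = 0 → τ b₁ = 0 → τ b₂ = 0 → τ (a₁ * b₁ * a₂ * b₂) = 0) :
    ∀ x y : A, x ∈ A₀ → y ∈ B₀ → star x = x → star y = y →
      τ x = 0 → τ y = 0 →
      trNorm2 τ (x * y - y * x) = Real.sqrt 2 * trNorm2 τ x * trNorm2 τ y ∧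
      (0 < trNorm2 τ x → 0 < trNorm2 τ y → x * y - y * x ≠ 0) := by
  intro x y hx hy hsx hsy htx hty
  have hfactor : τ (x * x * (y * y)) = τ (x * x) * τ (y * y) :=
    hind1 _ (mul_mem hx hx) _ (mul_mem hy hy)
  have hcross : τ (x * y * x * y) = 0 := hind2 x hx x hx y hy y hy htx htx hty hty
  have hx2 := hτ.trace_star_mul_self x
  have hy2 := hτ.trace_star_mul_self y
  rw [hsx] at hx2
  rw [hsy] at hy2
  have hsq : trNorm2 τ (x * y - y * x) ^ 2 = 2 * trNorm2 τ x ^ 2 * trNorm2 τ y ^ 2 := by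
    have h := trace_star_commutator_mul_commutator τ hτ.trace_comm hsx hsy
    rw [hτ.trace_star_mul_self, hfactor, hcross, hx2, hy2] at h
    exact Complex.ofReal_injective (by push_cast at h ⊢; linear_combination h)
  have hmain : trNorm2 τ (x * y - y * x) = Real.sqrt 2 * trNorm2 τ x * trNorm2 τ y := by
    rw [← Real.sqrt_sq (trNorm2_nonneg τ _), hsq, Real.sqrt_mul (by positivity),
      Real.sqrt_mul (by norm_num), Real.sqrt_sq (trNorm2_nonneg τ _),
      Real.sqrt_sq (trNorm2_nonneg τ _)]
  refine ⟨hmain, fun hpx hpy hzero => ?_⟩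
  rw [hzero, trNorm2_zero] at hmain
  exact (by positivity : (0 : ℝ) < Real.sqrt 2 * trNorm2 τ x * trNorm2 τ y).ne hmain

/-- If `A₀, B₀` are 2-independent star-subalgebras with respect to a tracial
state `τ`, then for all trace-zero self-adjoint `x ∈ A₀` and `y ∈ B₀` one has
`‖[x, y]‖₂ = √2 ‖x‖₂ ‖y‖₂`; in particular, if moreover `‖x‖₂ > 0` and
`‖y‖₂ > 0`, then `[x, y] ≠ 0`. -/
theorem norm2_commutator_of_two_independent
    {A : Type*} [NormedRing A] [StarRing A] [CStarRing A]
    [NormedAlgebra ℂ A] [StarModule ℂ A] [CompleteSpace A]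
    (τ : A →ₗ[ℂ] ℂ) (hτ : IsTracialState τ)
    (A₀ B₀ : StarSubalgebra ℂ A)
    (hind1 : ∀ a ∈ A₀, ∀ b ∈ B₀, τ (a * b) = τ a * τ b)
    (hind2 : ∀ a₁ ∈ A₀, ∀ a₂ ∈ A₀, ∀ b₁ ∈ B₀, ∀ b₂ ∈ B₀,
      τ a₁ = 0 → τ a₂ = 0 → τ b₁ = 0 → τ b₂ = 0 → τ (a₁ * b₁ * a₂ * b₂) = 0) :
    ∀ x y : A, x ∈ A₀ → y ∈ B₀ → star x = x → star y = y →
      τ x = 0 → τ y = 0 →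
      trNorm2 τ (x * y - y * x) = Real.sqrt 2 * trNorm2 τ x * trNorm2 τ y ∧
      (0 < trNorm2 τ x → 0 < trNorm2 τ y → x * y - y * x ≠ 0) :=
  norm2_commutator_of_two_independent_general τ hτ A₀ B₀ hind1 hind2
end
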